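/- Let Q ≻ 0, R ≻ 0, B ∈ ℝ^{n×m}, A ∈ ℝ^{n×n}, and P̄ ≻ 0. Consider the 2×2 block matrix M = [[Q⁻¹ + BR⁻¹Bᵀ, −Q⁻¹Aᵀ], [−AQ⁻¹, P̄ + AQ⁻¹Aᵀ]]. Then M is invertible and the (1,1) block of the quadratic form [A; 0]ᵀ M⁻¹ [A; 0] equals Aᵀ((Q + AᵀP̄⁻¹A)⁻¹ + BR⁻¹Bᵀ)⁻¹A. -/

import Mathlib

open Matrix

theorem block_inversion_identity_horizon_two {n m : ℕ}
    (Q A Pbar : Matrix (Fin n) (Fin n) ℝ) (R : Matrix (Fin m) (Fin m) ℝ)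
    (B : Matrix (Fin n) (Fin m) ℝ)
    (hQ : Q.PosDef) (hR : R.PosDef) (hPbar : Pbar.PosDef) :
    IsUnit (Matrix.fromBlocks (Q⁻¹ + B * R⁻¹ * Bᵀ) (-(Q⁻¹ * Aᵀ))
        (-(A * Q⁻¹)) (Pbar + A * Q⁻¹ * Aᵀ)) ∧
      (Matrix.fromRows A (0 : Matrix (Fin n) (Fin n) ℝ))ᵀ *
          (Matrix.fromBlocks (Q⁻¹ + B * R⁻¹ * Bᵀ) (-(Q⁻¹ * Aᵀ))
            (-(A * Q⁻¹)) (Pbar + A * Q⁻¹ * Aᵀ))⁻¹ *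
          Matrix.fromRows A (0 : Matrix (Fin n) (Fin n) ℝ) =
        Aᵀ * ((Q + Aᵀ * Pbar⁻¹ * A)⁻¹ + B * R⁻¹ * Bᵀ)⁻¹ * A := by
  have hQi : (Q⁻¹ : Matrix (Fin n) (Fin n) ℝ).PosDef := hQ.inv
  have hPi : (Pbar⁻¹ : Matrix (Fin n) (Fin n) ℝ).PosDef := hPbar.inv
  have hRi : (R⁻¹ : Matrix (Fin m) (Fin m) ℝ).PosDef := hR.inv
  have hBRB : (B * R⁻¹ * Bᵀ).PosSemidef := by
    have := hRi.posSemidef.mul_mul_conjTranspose_same B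
    simpa [Matrix.mul_assoc] using this
  have hAQA : (A * Q⁻¹ * Aᵀ).PosSemidef := by
    have := hQi.posSemidef.mul_mul_conjTranspose_same A
    simpa [Matrix.mul_assoc] using this
  have hAPA : (Aᵀ * Pbar⁻¹ * A).PosSemidef := by
    have := hPi.posSemidef.conjTranspose_mul_mul_same A
    simpa [Matrix.mul_assoc] using this
  -- D := lower-right block
  have hD : (Pbar + A * Q⁻¹ * Aᵀ).PosDef := hPbar.add_posSemidef hAQA
  have hW : (Q + Aᵀ * Pbar⁻¹ * A).PosDef := hQ.add_posSemidef hAPA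
  -- S := the matrix on the RHS
  have hS : ((Q + Aᵀ * Pbar⁻¹ * A)⁻¹ + B * R⁻¹ * Bᵀ).PosDef := hW.inv.add_posSemidef hBRB
  letI iD : Invertible (Pbar + A * Q⁻¹ * Aᵀ) := hD.isUnit.invertible
  letI iS : Invertible ((Q + Aᵀ * Pbar⁻¹ * A)⁻¹ + B * R⁻¹ * Bᵀ) := hS.isUnit.invertible
  -- Woodbury: (Q + Aᵀ Pbar⁻¹ A)⁻¹ = Q⁻¹ - Q⁻¹ Aᵀ (Pbar + A Q⁻¹ Aᵀ)⁻¹ A Q⁻¹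
  have hwood : (Q + Aᵀ * Pbar⁻¹ * A)⁻¹
      = Q⁻¹ - Q⁻¹ * Aᵀ * (Pbar + A * Q⁻¹ * Aᵀ)⁻¹ * A * Q⁻¹ := by
    have hPP : Pbar⁻¹⁻¹ = Pbar :=
      Matrix.nonsing_inv_nonsing_inv Pbar ((Matrix.isUnit_iff_isUnit_det _).mp hPbar.isUnit)
    have := Matrix.add_mul_mul_inv_eq_sub Q Aᵀ Pbar⁻¹ A hQ.isUnit hPi.isUnit
      (by rw [hPP]; exact hD.isUnit)
    rwa [hPP] at this
  -- The Schur complement equals S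
  have hschur : (Q⁻¹ + B * R⁻¹ * Bᵀ)
        - (-(Q⁻¹ * Aᵀ)) * ⅟(Pbar + A * Q⁻¹ * Aᵀ) * (-(A * Q⁻¹))
      = (Q + Aᵀ * Pbar⁻¹ * A)⁻¹ + B * R⁻¹ * Bᵀ := by
    rw [invOf_eq_nonsing_inv, hwood]
    noncomm_ring
  letI ischur : Invertible ((Q⁻¹ + B * R⁻¹ * Bᵀ)
      - (-(Q⁻¹ * Aᵀ)) * ⅟(Pbar + A * Q⁻¹ * Aᵀ) * (-(A * Q⁻¹))) := hschur ▸ iS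
  letI iM : Invertible (Matrix.fromBlocks (Q⁻¹ + B * R⁻¹ * Bᵀ) (-(Q⁻¹ * Aᵀ))
      (-(A * Q⁻¹)) (Pbar + A * Q⁻¹ * Aᵀ)) :=
    Matrix.fromBlocks₂₂Invertible _ _ _ _
  refine ⟨isUnit_of_invertible _, ?_⟩
  rw [← invOf_eq_nonsing_inv, Matrix.invOf_fromBlocks₂₂_eq,
    Matrix.transpose_fromRows, Matrix.transpose_zero,
    Matrix.fromCols_mul_fromBlocks, Matrix.fromCols_mul_fromRows]
  have h11 : ⅟((Q⁻¹ + B * R⁻¹ * Bᵀ)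
        - (-(Q⁻¹ * Aᵀ)) * ⅟(Pbar + A * Q⁻¹ * Aᵀ) * (-(A * Q⁻¹)))
      = ((Q + Aᵀ * Pbar⁻¹ * A)⁻¹ + B * R⁻¹ * Bᵀ)⁻¹ := by
    rw [invOf_eq_nonsing_inv]
    exact congrArg _ hschur
  simp [h11, Matrix.mul_assoc]
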